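/- arXiv:2512.19157 — 4 statements merged into one kernel-verified Lean document; each statement's English description precedes it below -/
import Mathlib

section
/- Let p ∈ [1,∞) with conjugate exponent q, and let R ⊆ P_q(ℝ) satisfy Assumptions (OT)(i) and (OT)(ii). Then for all random variables X₁, X₂ ∈ L^p(Ω,ℝ) with X₁ ≤ X₂ ℙ-almost surely, one has ρ_R(X₁) ≤ ρ_R(X₂) (monotonicity of the transport-based risk measure). -/
/-!
Disintegrating a plan `π₁` with first marginal `P.map X₁` and composing the kernel with `X₁`
gives a measure `μ` on `Ω × ℝ` with first marginal `P` whose image under `(ω, y) ↦ (X₁ ω, y)`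
is `π₁`. Its image under `(ω, y) ↦ (X₂ ω, y)` is then a plan for `P.map X₂` with the same
second marginal, and as that marginal lives on `[0, ∞)`, `X₁ ≤ X₂` gives
`∫ X₁ ω * y ∂μ ≤ ∫ X₂ ω * y ∂μ`. Hölder's inequality bounds the values of the plans for
`P.map X₂`, which is needed since `sSup` of an unbounded set of reals is `0`.
-/

open MeasureTheory ENNReal

/-- `M_s(m)`: the moment of order `s ∈ [1,∞]` of a measure `m` on `ℝ`
(for `s = ∞`, the essential supremum of `|x|`, i.e. the sup of `|x|` over the support). -/
noncomputable def Mmom (s : ℝ≥0∞) (m : Measure ℝ) : ℝ≥0∞ :=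
  eLpNorm (fun x : ℝ => x) s m

/-- Assumption (OT)(i): `R` is a bounded set of probability measures with finite `q`-moment. -/
def OTone (q : ℝ≥0∞) (R : Set (Measure ℝ)) : Prop :=
  (∀ r ∈ R, IsProbabilityMeasure r) ∧ (⨆ r ∈ R, Mmom q r) < ⊤

/-- Assumption (OT)(ii): every `r ∈ R` is supported in `[0,∞)` and has expectation `1`. -/
def OTtwo (R : Set (Measure ℝ)) : Prop :=
  ∀ r ∈ R, r (Set.Iio (0:ℝ)) = 0 ∧ ∫⁻ y, ENNReal.ofReal y ∂r = 1

/-- The value `χ_R(m)` of the generalized optimal transport problem: the supremum of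
`∫ x·y dπ` over transport plans `π` with first marginal `m` and second marginal in `R`. -/
noncomputable def chi (R : Set (Measure ℝ)) (m : Measure ℝ) : ℝ :=
  sSup {v : ℝ | ∃ π : Measure (ℝ × ℝ), IsProbabilityMeasure π ∧
    π.map Prod.fst = m ∧ π.map Prod.snd ∈ R ∧ v = ∫ z : ℝ × ℝ, z.1 * z.2 ∂π}

open ProbabilityTheory

section Gluing

variable {Ω α β : Type*} [MeasurableSpace Ω] [MeasurableSpace α] [MeasurableSpace β]

lemma map_prodMap_compProd_comap (P : Measure Ω) [SFinite P] (κ : Kernel α β)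
    [IsSFiniteKernel κ] {X : Ω → α} (hX : Measurable X) :
    (P ⊗ₘ κ.comap X hX).map (Prod.map X id) = P.map X ⊗ₘ κ := by
  have hXid : Measurable (Prod.map X id : Ω × β → α × β) := hX.prodMap measurable_id
  ext s hs
  rw [Measure.map_apply hXid hs, Measure.compProd_apply (hXid hs), Measure.compProd_apply hs,
    lintegral_map (Kernel.measurable_kernel_prodMk_left hs) hX]
  rfl

lemma exists_map_fst_eq_and_map_prodMap_eq [StandardBorelSpace β] [Nonempty β]
    (P : Measure Ω) [SFinite P] {X : Ω → α} (hX : Measurable X)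
    (π : Measure (α × β)) [IsFiniteMeasure π] (hπ : π.map Prod.fst = P.map X) :
    ∃ μ : Measure (Ω × β), μ.map Prod.fst = P ∧ μ.map (Prod.map X id) = π :=
  ⟨P ⊗ₘ π.condKernel.comap X hX, Measure.fst_compProd P _, by
    rw [map_prodMap_compProd_comap, ← hπ]
    exact π.disintegrate π.condKernel⟩

end Gluing

lemma exists_coupling_integral_mul_le {Ω : Type*} [MeasurableSpace Ω] {P : Measure Ω}
    [IsProbabilityMeasure P] {p q : ℝ≥0∞} [HolderTriple p q 1] {X₁ X₂ : Ω → ℝ}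
    (hX₁m : Measurable X₁) (hX₂m : Measurable X₂) (hX₁ : MemLp X₁ p P) (hX₂ : MemLp X₂ p P)
    (hle : X₁ ≤ᵐ[P] X₂) {π₁ : Measure (ℝ × ℝ)} [IsFiniteMeasure π₁]
    (hfst : π₁.map Prod.fst = P.map X₁) (hsnd : MemLp Prod.snd q π₁)
    (hpos : ∀ᵐ z ∂π₁, 0 ≤ z.2) :
    ∃ π₂ : Measure (ℝ × ℝ), IsProbabilityMeasure π₂ ∧ π₂.map Prod.fst = P.map X₂ ∧
      π₂.map Prod.snd = π₁.map Prod.snd ∧ ∫ z, z.1 * z.2 ∂π₁ ≤ ∫ z, z.1 * z.2 ∂π₂ := by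
  obtain ⟨μ, hμP, hμπ₁⟩ := exists_map_fst_eq_and_map_prodMap_eq P hX₁m π₁ hfst
  have hXid₁ : Measurable (Prod.map X₁ id : Ω × ℝ → ℝ × ℝ) := hX₁m.prodMap measurable_id
  have hXid₂ : Measurable (Prod.map X₂ id : Ω × ℝ → ℝ × ℝ) := hX₂m.prodMap measurable_id
  have : IsProbabilityMeasure (μ.map Prod.fst) := hμP ▸ inferInstance
  have : IsProbabilityMeasure μ := μ.isProbabilityMeasure_of_map Prod.fst
  rw [← hμP] at hX₁ hX₂ hle
  rw [← hμπ₁] at hsnd hpos ⊢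
  refine ⟨μ.map (Prod.map X₂ id), Measure.isProbabilityMeasure_map hXid₂.aemeasurable,
    ?_, ?_, ?_⟩
  · rw [Measure.map_map measurable_fst hXid₂, ← hμP, Measure.map_map hX₂m measurable_fst]
    rfl
  · rw [Measure.map_map measurable_snd hXid₂, Measure.map_map measurable_snd hXid₁]
    rfl
  have hsnd' := hsnd.comp_of_map hXid₁.aemeasurable
  have hint₁ : Integrable (fun z : Ω × ℝ => X₁ z.1 * z.2) μ :=
    (hX₁.comp_of_map measurable_fst.aemeasurable).integrable_mul hsnd'
  have hint₂ : Integrable (fun z : Ω × ℝ => X₂ z.1 * z.2) μ :=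
    (hX₂.comp_of_map measurable_fst.aemeasurable).integrable_mul hsnd'
  rw [integral_map hXid₁.aemeasurable (by fun_prop),
    integral_map hXid₂.aemeasurable (by fun_prop)]
  refine integral_mono_ae hint₁ hint₂ ?_
  filter_upwards [ae_of_ae_map measurable_fst.aemeasurable hle,
    ae_of_ae_map hXid₁.aemeasurable hpos] with z hz h0
  exact mul_le_mul_of_nonneg_right hz h0

lemma Mmom_map {Ω : Type*} [MeasurableSpace Ω] {μ : Measure Ω} {X : Ω → ℝ}
    (hX : AEMeasurable X μ) (s : ℝ≥0∞) : Mmom s (μ.map X) = eLpNorm X s μ :=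
  eLpNorm_map_measure measurable_id.aestronglyMeasurable hX

lemma enorm_integral_fst_mul_snd_le {p q : ℝ≥0∞} [HolderTriple p q 1] (π : Measure (ℝ × ℝ)) :
    ‖∫ z, z.1 * z.2 ∂π‖ₑ ≤ Mmom p (π.map Prod.fst) * Mmom q (π.map Prod.snd) :=
  calc ‖∫ z, z.1 * z.2 ∂π‖ₑ ≤ ∫⁻ z, ‖z.1 * z.2‖ₑ ∂π := enorm_integral_le_lintegral_enorm _
    _ = eLpNorm (fun z : ℝ × ℝ => z.1 * z.2) 1 π := eLpNorm_one_eq_lintegral_enorm.symm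
    _ ≤ eLpNorm Prod.fst p π * eLpNorm Prod.snd q π :=
      eLpNorm_smul_le_mul_eLpNorm (f := Prod.snd) (φ := Prod.fst)
        measurable_snd.aestronglyMeasurable measurable_fst.aestronglyMeasurable
    _ = Mmom p (π.map Prod.fst) * Mmom q (π.map Prod.snd) := by
      rw [Mmom_map measurable_fst.aemeasurable, Mmom_map measurable_snd.aemeasurable]

def transportValues (R : Set (Measure ℝ)) (m : Measure ℝ) : Set ℝ :=
  {v : ℝ | ∃ π : Measure (ℝ × ℝ), IsProbabilityMeasure π ∧
    π.map Prod.fst = m ∧ π.map Prod.snd ∈ R ∧ v = ∫ z : ℝ × ℝ, z.1 * z.2 ∂π}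

section TransportValues

variable {R : Set (Measure ℝ)} {m : Measure ℝ}

lemma chi_eq_sSup_transportValues : chi R m = sSup (transportValues R m) := rfl

lemma transportValues_nonempty [IsProbabilityMeasure m] (hR : ∀ r ∈ R, IsProbabilityMeasure r)
    (hRne : R.Nonempty) : (transportValues R m).Nonempty := by
  obtain ⟨r, hr⟩ := hRne
  have := hR r hr
  exact ⟨_, m.prod r, inferInstance, Measure.fst_prod,
    by rwa [← Measure.snd, Measure.snd_prod], rfl⟩

lemma bddAbove_transportValues {p q : ℝ≥0∞} [HolderTriple p q 1]
    (hR : (⨆ r ∈ R, Mmom q r) < ⊤) (hm : Mmom p m < ⊤) : BddAbove (transportValues R m) := by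
  refine ⟨(Mmom p m * ⨆ r ∈ R, Mmom q r).toReal, ?_⟩
  rintro _ ⟨π, -, rfl, hπR, rfl⟩
  calc ∫ z, z.1 * z.2 ∂π ≤ ‖∫ z, z.1 * z.2 ∂π‖ := Real.le_norm_self _
    _ = ‖∫ z, z.1 * z.2 ∂π‖ₑ.toReal := (toReal_enorm _).symm
    _ ≤ _ := toReal_mono (mul_ne_top hm.ne hR.ne) <|
      (enorm_integral_fst_mul_snd_le π).trans (mul_le_mul_right (le_biSup _ hπR) _)

end TransportValues

lemma chi_map_le_chi_map_of_measurable {p q : ℝ≥0∞} [HolderTriple p q 1]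
    {R : Set (Measure ℝ)} (hR1 : OTone q R) (hR2 : ∀ r ∈ R, r (Set.Iio 0) = 0)
    {Ω : Type*} [MeasurableSpace Ω] {P : Measure Ω} [IsProbabilityMeasure P] {X₁ X₂ : Ω → ℝ}
    (hX₁m : Measurable X₁) (hX₂m : Measurable X₂) (hX₁ : MemLp X₁ p P) (hX₂ : MemLp X₂ p P)
    (hle : X₁ ≤ᵐ[P] X₂) : chi R (P.map X₁) ≤ chi R (P.map X₂) := by
  rw [chi_eq_sSup_transportValues, chi_eq_sSup_transportValues]
  rcases R.eq_empty_or_nonempty with rfl | hRne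
  · simp [transportValues]
  have := Measure.isProbabilityMeasure_map (μ := P) hX₁m.aemeasurable
  refine csSup_le (transportValues_nonempty hR1.1 hRne) ?_
  rintro _ ⟨π₁, hπ₁, hfst, hsnd, rfl⟩
  have hsndLp : MemLp Prod.snd q π₁ :=
    ⟨measurable_snd.aestronglyMeasurable, by
      rw [← Mmom_map measurable_snd.aemeasurable]
      exact (le_biSup (fun r => Mmom q r) hsnd).trans_lt hR1.2⟩
  have hpos : ∀ᵐ z ∂π₁, 0 ≤ z.2 := by
    refine ae_of_ae_map measurable_snd.aemeasurable ?_
    filter_upwards [measure_eq_zero_iff_ae_notMem.1 (hR2 _ hsnd)] with y hy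
    exact not_lt.1 hy
  obtain ⟨π₂, hπ₂, hfst₂, hsnd₂, hπ₁π₂⟩ :=
    exists_coupling_integral_mul_le hX₁m hX₂m hX₁ hX₂ hle hfst hsndLp hpos
  exact hπ₁π₂.trans <| le_csSup
    (bddAbove_transportValues hR1.2 ((Mmom_map hX₂m.aemeasurable p).trans_lt hX₂.2))
    ⟨π₂, hπ₂, hfst₂, hsnd₂ ▸ hsnd, rfl⟩

theorem monotonicity_general
    (p q : ℝ≥0∞) (hpq : p⁻¹ + q⁻¹ = 1)
    (R : Set (Measure ℝ)) (hR1 : OTone q R) (hR2 : OTtwo R)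
    (Ω : Type) [MeasurableSpace Ω] (P : Measure Ω) [IsProbabilityMeasure P]
    (X₁ X₂ : Ω → ℝ) (hX₁ : MemLp X₁ p P) (hX₂ : MemLp X₂ p P)
    (hle : ∀ᵐ ω ∂P, X₁ ω ≤ X₂ ω) :
    chi R (P.map X₁) ≤ chi R (P.map X₂) := by
  have : HolderConjugate p q := holderConjugate_iff.2 hpq
  obtain ⟨Y₁, hY₁m, hXY₁⟩ := hX₁.aestronglyMeasurable.aemeasurable
  obtain ⟨Y₂, hY₂m, hXY₂⟩ := hX₂.aestronglyMeasurable.aemeasurable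
  have hleY : Y₁ ≤ᵐ[P] Y₂ := by
    filter_upwards [hle, hXY₁, hXY₂] with ω h h₁ h₂
    rwa [← h₁, ← h₂]
  rw [Measure.map_congr hXY₁, Measure.map_congr hXY₂]
  exact chi_map_le_chi_map_of_measurable hR1 (fun r hr => (hR2 r hr).1) hY₁m hY₂m
    (hX₁.ae_eq hXY₁) (hX₂.ae_eq hXY₂) hleY

/-- Monotonicity of the transport-based risk measure: for `R` satisfying (OT)(i)–(ii),
if `X₁ ≤ X₂` almost surely then `ρ_R(X₁) ≤ ρ_R(X₂)`. -/
theorem monotonicity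
    (p q : ℝ≥0∞) (hp1 : 1 ≤ p) (hptop : p ≠ ⊤) (hpq : p⁻¹ + q⁻¹ = 1)
    (R : Set (Measure ℝ)) (hR1 : OTone q R) (hR2 : OTtwo R)
    (Ω : Type) [MeasurableSpace Ω] (P : Measure Ω) [IsProbabilityMeasure P]
    (X₁ X₂ : Ω → ℝ) (hX₁ : MemLp X₁ p P) (hX₂ : MemLp X₂ p P)
    (hle : ∀ᵐ ω ∂P, X₁ ω ≤ X₂ ω) :
    chi R (P.map X₁) ≤ chi R (P.map X₂) :=
  monotonicity_general p q hpq R hR1 hR2 Ω P X₁ X₂ hX₁ hX₂ hle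
end

section
/- Let p ∈ [1,∞) with conjugate exponent q, let ρ : L^p(Ω,ℝ) → ℝ be a coherent risk measure, and let 𝔜 ⊆ L^q(Ω,ℝ) be a bounded set of almost surely nonnegative random variables with E[Y] = 1 for every Y ∈ 𝔜, such that ρ(X) = sup_{Y ∈ 𝔜} E[XY] for every X ∈ L^p(Ω,ℝ). Define R := {ℙ_Y : Y ∈ 𝔜} ⊆ P_q(ℝ), the set of laws of elements of 𝔜. Then R satisfies Assumptions (OT)(i) and (OT)(ii), and ρ(X) ≤ ρ_R(X) for every X ∈ L^p(Ω,ℝ). -/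
open MeasureTheory ENNReal

/-! Each `Y ∈ 𝔜` is coupled with `X` through the joint law of `(X, Y)`, a transport plan from
`ℙ_X` to `ℙ_Y ∈ R` with value `E[XY]`; hence every `E[XY]` is one of the values whose supremum
is `χ_R(ℙ_X)`. These values are bounded above by Hölder's inequality on the plan, since its
marginal moments are `M_p(ℙ_X)` and `M_q(r) ≤ L_R`. -/

section Laws

variable {Ω : Type*} [MeasurableSpace Ω] {P : Measure Ω} {Y : Ω → ℝ}

theorem Mmom_map_s9 (hY : AEMeasurable Y P) (s : ℝ≥0∞) : Mmom s (P.map Y) = eLpNorm Y s P :=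
  eLpNorm_map_measure aestronglyMeasurable_id hY

theorem map_Iio_zero_eq_zero_of_ae_nonneg (hY : AEMeasurable Y P)
    (hpos : ∀ᵐ ω ∂P, 0 ≤ Y ω) : P.map Y (Set.Iio 0) = 0 := by
  rw [Measure.map_apply_of_aemeasurable hY measurableSet_Iio, ← ae_iff.mp hpos]
  simp [Set.preimage, not_le]

theorem lintegral_ofReal_map_eq_ofReal_integral (hY : Integrable Y P)
    (hpos : ∀ᵐ ω ∂P, 0 ≤ Y ω) :
    ∫⁻ y, ENNReal.ofReal y ∂(P.map Y) = ENNReal.ofReal (∫ ω, Y ω ∂P) := by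
  rw [lintegral_map' measurable_ofReal.aemeasurable hY.aemeasurable,
    ofReal_integral_eq_lintegral_ofReal hY hpos]

theorem OTone.of_eLpNorm_le [IsProbabilityMeasure P] {q C : ℝ≥0∞} (hC : C < ⊤)
    {𝔜 : Set (Ω → ℝ)} (hmeas : ∀ Y ∈ 𝔜, AEMeasurable Y P) (hbdd : ∀ Y ∈ 𝔜, eLpNorm Y q P ≤ C) :
    OTone q {r : Measure ℝ | ∃ Y ∈ 𝔜, r = P.map Y} := by
  refine ⟨?_, lt_of_le_of_lt (iSup₂_le ?_) hC⟩ <;> rintro r ⟨Y, hY, rfl⟩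
  · exact Measure.isProbabilityMeasure_map (hmeas Y hY)
  · exact (Mmom_map_s9 (hmeas Y hY) q).trans_le (hbdd Y hY)

theorem OTtwo.of_ae_nonneg_of_integral_eq_one {𝔜 : Set (Ω → ℝ)}
    (hint : ∀ Y ∈ 𝔜, Integrable Y P) (hpos : ∀ Y ∈ 𝔜, ∀ᵐ ω ∂P, 0 ≤ Y ω)
    (hexp : ∀ Y ∈ 𝔜, ∫ ω, Y ω ∂P = 1) : OTtwo {r : Measure ℝ | ∃ Y ∈ 𝔜, r = P.map Y} := by
  rintro r ⟨Y, hY, rfl⟩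
  refine ⟨map_Iio_zero_eq_zero_of_ae_nonneg (hint Y hY).aemeasurable (hpos Y hY), ?_⟩
  rw [lintegral_ofReal_map_eq_ofReal_integral (hint Y hY) (hpos Y hY), hexp Y hY, ofReal_one]

end Laws

theorem integral_mul_le_toReal_eLpNorm_mul_eLpNorm {α : Type*} [MeasurableSpace α]
    {μ : Measure α} {p q : ℝ≥0∞} [HolderConjugate p q] {f g : α → ℝ}
    (hf : AEStronglyMeasurable f μ) (hg : AEStronglyMeasurable g μ)
    (hfin : eLpNorm f p μ * eLpNorm g q μ ≠ ⊤) :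
    ∫ x, f x * g x ∂μ ≤ (eLpNorm f p μ * eLpNorm g q μ).toReal := by
  have hHolder : eLpNorm (f • g) 1 μ ≤ eLpNorm f p μ * eLpNorm g q μ :=
    eLpNorm_smul_le_mul_eLpNorm hg hf
  calc ∫ x, f x * g x ∂μ ≤ ‖∫ x, f x * g x ∂μ‖ := Real.le_norm_self _
    _ ≤ (eLpNorm (f • g) 1 μ).toReal := by
      rw [eLpNorm_one_eq_lintegral_enorm]
      simpa only [ofReal_norm, Pi.smul_apply, smul_eq_mul, Pi.mul_apply] using
        norm_integral_le_lintegral_norm (fun x => f x * g x)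
    _ ≤ (eLpNorm f p μ * eLpNorm g q μ).toReal := toReal_mono hfin hHolder

def planValues (R : Set (Measure ℝ)) (m : Measure ℝ) : Set ℝ :=
  {v : ℝ | ∃ π : Measure (ℝ × ℝ), IsProbabilityMeasure π ∧
    π.map Prod.fst = m ∧ π.map Prod.snd ∈ R ∧ v = ∫ z : ℝ × ℝ, z.1 * z.2 ∂π}

theorem chi_eq_sSup_planValues (R : Set (Measure ℝ)) (m : Measure ℝ) :
    chi R m = sSup (planValues R m) :=
  rfl

theorem integral_mul_mem_planValues {Ω : Type*} [MeasurableSpace Ω] {P : Measure Ω}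
    [IsProbabilityMeasure P] {X Y : Ω → ℝ} (hX : AEMeasurable X P) (hY : AEMeasurable Y P)
    {R : Set (Measure ℝ)} (hR : P.map Y ∈ R) :
    ∫ ω, X ω * Y ω ∂P ∈ planValues R (P.map X) := by
  have hXY : AEMeasurable (fun ω => (X ω, Y ω)) P := hX.prodMk hY
  refine ⟨P.map (fun ω => (X ω, Y ω)), Measure.isProbabilityMeasure_map hXY, ?_, ?_, ?_⟩
  · exact AEMeasurable.map_map_of_aemeasurable measurable_fst.aemeasurable hXY
  · rwa [AEMeasurable.map_map_of_aemeasurable measurable_snd.aemeasurable hXY]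
  · rw [integral_map hXY (by fun_prop)]

theorem bddAbove_planValues {p q : ℝ≥0∞} [HolderConjugate p q] {R : Set (Measure ℝ)}
    {m : Measure ℝ} (hm : Mmom p m ≠ ⊤) (hR : (⨆ r ∈ R, Mmom q r) < ⊤) :
    BddAbove (planValues R m) := by
  refine ⟨(Mmom p m * ⨆ r ∈ R, Mmom q r).toReal, ?_⟩
  rintro v ⟨π, -, hfst, hsnd, rfl⟩
  have hfst' : eLpNorm Prod.fst p π = Mmom p m := by
    rw [← hfst, Mmom_map_s9 measurable_fst.aemeasurable]
  have hsnd' : eLpNorm Prod.snd q π ≤ ⨆ r ∈ R, Mmom q r := by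
    rw [← Mmom_map_s9 measurable_snd.aemeasurable]
    exact le_iSup₂ (f := fun r _ => Mmom q r) _ hsnd
  have hprod : eLpNorm Prod.fst p π * eLpNorm Prod.snd q π ≤ Mmom p m * ⨆ r ∈ R, Mmom q r :=
    hfst' ▸ mul_le_mul_right hsnd' _
  have hfin : Mmom p m * ⨆ r ∈ R, Mmom q r ≠ ⊤ := mul_ne_top hm hR.ne
  calc ∫ z : ℝ × ℝ, z.1 * z.2 ∂π
      ≤ (eLpNorm Prod.fst p π * eLpNorm Prod.snd q π).toReal :=
        integral_mul_le_toReal_eLpNorm_mul_eLpNorm measurable_fst.aestronglyMeasurable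
          measurable_snd.aestronglyMeasurable
          (ne_top_of_le_ne_top hfin hprod)
    _ ≤ (Mmom p m * ⨆ r ∈ R, Mmom q r).toReal := toReal_mono hfin hprod

theorem dual_representation_gives_upper_bound_general
    (p q : ℝ≥0∞) (hpq : p⁻¹ + q⁻¹ = 1)
    (Ω : Type) [MeasurableSpace Ω] (P : Measure Ω) [IsProbabilityMeasure P]
    (ρ : (Ω → ℝ) → ℝ)
    (𝔜 : Set (Ω → ℝ))
    (h𝔜mem : ∀ Y ∈ 𝔜, MemLp Y q P)
    (h𝔜pos : ∀ Y ∈ 𝔜, ∀ᵐ ω ∂P, 0 ≤ Y ω)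
    (h𝔜exp : ∀ Y ∈ 𝔜, ∫ ω, Y ω ∂P = 1)
    (h𝔜bdd : ∃ C : ℝ≥0∞, C < ⊤ ∧ ∀ Y ∈ 𝔜, eLpNorm Y q P ≤ C)
    (hrep : ∀ X : Ω → ℝ, MemLp X p P →
      ρ X = sSup {v : ℝ | ∃ Y ∈ 𝔜, v = ∫ ω, X ω * Y ω ∂P}) :
    OTone q {r : Measure ℝ | ∃ Y ∈ 𝔜, r = P.map Y} ∧
    OTtwo {r : Measure ℝ | ∃ Y ∈ 𝔜, r = P.map Y} ∧
    ∀ X : Ω → ℝ, MemLp X p P →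
      ρ X ≤ chi {r : Measure ℝ | ∃ Y ∈ 𝔜, r = P.map Y} (P.map X) := by
  have : HolderConjugate p q := holderConjugate_iff.mpr hpq
  obtain ⟨C, hC, hCb⟩ := h𝔜bdd
  have hmeas : ∀ Y ∈ 𝔜, AEMeasurable Y P := fun Y hY => (h𝔜mem Y hY).1.aemeasurable
  have hOTone := OTone.of_eLpNorm_le hC hmeas hCb
  refine ⟨hOTone, OTtwo.of_ae_nonneg_of_integral_eq_one
    (fun Y hY => (h𝔜mem Y hY).integrable (HolderConjugate.one_le q p)) h𝔜pos h𝔜exp, ?_⟩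
  intro X hX
  rw [hrep X hX, chi_eq_sSup_planValues]
  rcases 𝔜.eq_empty_or_nonempty with rfl | ⟨Y₀, hY₀⟩
  · -- both suprema are `sSup ∅`, since `R` is empty too
    simp [planValues]
  have hbdd := bddAbove_planValues (Mmom_map_s9 hX.1.aemeasurable p ▸ hX.2.ne) hOTone.2
  refine csSup_le ⟨_, Y₀, hY₀, rfl⟩ ?_
  rintro v ⟨Y, hY, rfl⟩
  exact le_csSup hbdd (integral_mul_mem_planValues hX.1.aemeasurable (hmeas Y hY) ⟨Y, hY, rfl⟩)

/-- Refined characterization, first part: if a coherent risk measure `ρ` on `L^p` admits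
the dual representation `ρ(X) = sup_{Y ∈ 𝔜} E[XY]` over a bounded set `𝔜 ⊆ L^q` of a.s.
nonnegative random variables of unit expectation, then the set `R` of laws of elements of
`𝔜` satisfies (OT)(i)–(ii) and `ρ(X) ≤ ρ_R(X)` for every `X ∈ L^p`. -/
theorem dual_representation_gives_upper_bound
    (p q : ℝ≥0∞) (hp1 : 1 ≤ p) (hptop : p ≠ ⊤) (hpq : p⁻¹ + q⁻¹ = 1)
    (Ω : Type) [MeasurableSpace Ω] (P : Measure Ω) [IsProbabilityMeasure P]
    (ρ : (Ω → ℝ) → ℝ)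
    (htrans : ∀ X : Ω → ℝ, MemLp X p P → ∀ α : ℝ, ρ (fun ω => X ω + α) = ρ X + α)
    (hhom : ∀ X : Ω → ℝ, MemLp X p P → ∀ δ : ℝ, 0 ≤ δ → ρ (fun ω => δ * X ω) = δ * ρ X)
    (hmono : ∀ X₁ X₂ : Ω → ℝ, MemLp X₁ p P → MemLp X₂ p P →
      (∀ᵐ ω ∂P, X₁ ω ≤ X₂ ω) → ρ X₁ ≤ ρ X₂)
    (hconv : ∀ X₁ X₂ : Ω → ℝ, MemLp X₁ p P → MemLp X₂ p P → ∀ θ : ℝ, 0 ≤ θ → θ ≤ 1 →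
      ρ (fun ω => (1 - θ) * X₁ ω + θ * X₂ ω) ≤ (1 - θ) * ρ X₁ + θ * ρ X₂)
    (𝔜 : Set (Ω → ℝ))
    (h𝔜mem : ∀ Y ∈ 𝔜, MemLp Y q P)
    (h𝔜pos : ∀ Y ∈ 𝔜, ∀ᵐ ω ∂P, 0 ≤ Y ω)
    (h𝔜exp : ∀ Y ∈ 𝔜, ∫ ω, Y ω ∂P = 1)
    (h𝔜bdd : ∃ C : ℝ≥0∞, C < ⊤ ∧ ∀ Y ∈ 𝔜, eLpNorm Y q P ≤ C)
    (hrep : ∀ X : Ω → ℝ, MemLp X p P →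
      ρ X = sSup {v : ℝ | ∃ Y ∈ 𝔜, v = ∫ ω, X ω * Y ω ∂P}) :
    OTone q {r : Measure ℝ | ∃ Y ∈ 𝔜, r = P.map Y} ∧
    OTtwo {r : Measure ℝ | ∃ Y ∈ 𝔜, r = P.map Y} ∧
    ∀ X : Ω → ℝ, MemLp X p P →
      ρ X ≤ chi {r : Measure ℝ | ∃ Y ∈ 𝔜, r = P.map Y} (P.map X) :=
  dual_representation_gives_upper_bound_general p q hpq Ω P ρ 𝔜 h𝔜mem h𝔜pos h𝔜exp h𝔜bdd hrep
end

section
/- Fix β ∈ [0,1) and let r_β := β·δ₀ + (1−β)·δ_{1/(1−β)}, a Borel probability measure on ℝ. Then for every X ∈ L¹(Ω,ℝ), the Conditional Value at Risk at level β, CV@R_β(X) := inf_{t ∈ ℝ} { t + (1/(1−β))·E[(X−t)₊] }, equals χ_{{r_β}}(ℙ_X), the value of the generalized optimal transport problem with first marginal ℙ_X and second marginal r_β: CV@R_β(X) = sup_{π ∈ Π(ℙ_X, r_β)} ∫_{ℝ²} x·y dπ(x,y). -/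
/-!
Write `c = (1 - β)⁻¹`. Since `r_β` lives on `{0, c}`, every plan satisfies
`x y ≤ t y + c (x - t)₊` almost surely, and integrating (with `∫ y dr_β = 1`) bounds every
value `∫ x y dπ` by the CV@R objective at `t`. Conversely, the comonotone plan
`u ↦ (q(u), c·1_{u > β})`, built from the quantile function `q` of `ℙ_X` on the uniform law
of `(0,1)`, has value `c ∫_β^1 q`: for `β > 0` this is the objective at `t = q(β)`, and for
`β = 0` it is `E X`, the limit of the objective as `t → -∞`.
-/

open MeasureTheory ENNReal

open ProbabilityTheory Set Filter Topology

/-- The left-continuous generalised inverse of `cdf m`, with junk value `0` outside `(0,1)`. -/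
noncomputable def quantile (m : Measure ℝ) (u : ℝ) : ℝ :=
  if u ∈ Ioo (0 : ℝ) 1 then sInf {y | u ≤ cdf m y} else 0

section Quantile

variable {m : Measure ℝ}

lemma nonempty_setOf_le_cdf {u : ℝ} (hu : u < 1) : {y | u ≤ cdf m y}.Nonempty :=
  ((tendsto_cdf_atTop (μ := m)).eventually (eventually_ge_nhds hu)).exists

lemma bddBelow_setOf_le_cdf {u : ℝ} (hu : 0 < u) : BddBelow {y | u ≤ cdf m y} := by
  obtain ⟨x₀, hx₀⟩ :=
    ((tendsto_cdf_atBot (μ := m)).eventually (eventually_lt_nhds hu)).exists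
  refine ⟨x₀, fun y hy => le_of_not_gt fun hlt => ?_⟩
  exact (hy.trans (monotone_cdf m hlt.le)).not_gt hx₀

lemma quantile_le_iff {u : ℝ} (hu : u ∈ Ioo (0 : ℝ) 1) (x : ℝ) :
    quantile m u ≤ x ↔ u ≤ cdf m x := by
  rw [quantile, if_pos hu]
  refine ⟨fun h => ?_, fun h => csInf_le (bddBelow_setOf_le_cdf hu.1) h⟩
  have hgt : ∀ y ∈ Ioi x, u ≤ cdf m y := fun y hy => by
    obtain ⟨s, hs, hsy⟩ := exists_lt_of_csInf_lt (nonempty_setOf_le_cdf hu.2) (h.trans_lt hy)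
    exact hs.trans (monotone_cdf m hsy.le)
  exact ge_of_tendsto (((cdf m).right_continuous x).mono Ioi_subset_Ici_self)
    (eventually_nhdsWithin_of_forall hgt)

lemma le_cdf_quantile {u : ℝ} (hu : u ∈ Ioo (0 : ℝ) 1) : u ≤ cdf m (quantile m u) :=
  (quantile_le_iff hu _).mp le_rfl

lemma quantile_mono {u v : ℝ} (hu : u ∈ Ioo (0 : ℝ) 1) (hv : v ∈ Ioo (0 : ℝ) 1)
    (huv : u ≤ v) :
    quantile m u ≤ quantile m v :=
  (quantile_le_iff hu _).mpr (huv.trans (le_cdf_quantile hv))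

lemma preimage_quantile_Iic_inter_Ioo (x : ℝ) :
    quantile m ⁻¹' Iic x ∩ Ioo 0 1 = Iic (cdf m x) ∩ Ioo 0 1 := by
  ext u
  simp only [mem_inter_iff, mem_preimage, mem_Iic, and_congr_left_iff]
  exact fun hu => quantile_le_iff hu x

lemma measurable_quantile : Measurable (quantile m) := by
  refine measurable_of_Iic fun x => ?_
  have hsplit : quantile m ⁻¹' Iic x =
      (quantile m ⁻¹' Iic x ∩ Ioo 0 1) ∪ (quantile m ⁻¹' Iic x ∩ (Ioo 0 1)ᶜ) := by
    rw [inter_union_compl]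
  have hout : quantile m ⁻¹' Iic x ∩ (Ioo 0 1)ᶜ = {_u | 0 ≤ x} ∩ (Ioo 0 1)ᶜ := by
    ext u
    simp only [mem_inter_iff, mem_preimage, mem_Iic, mem_compl_iff, mem_ofPred_eq,
      and_congr_left_iff]
    intro hu
    rw [quantile, if_neg hu]
  rw [hsplit, preimage_quantile_Iic_inter_Ioo, hout]
  exact (measurableSet_Iic.inter measurableSet_Ioo).union
    ((MeasurableSet.const _).inter measurableSet_Ioo.compl)

lemma volume_Iic_inter_Ioo {a : ℝ} (ha : a ≤ 1) :
    volume (Iic a ∩ Ioo 0 1) = ENNReal.ofReal a := by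
  refine le_antisymm ?_ ?_
  · calc volume (Iic a ∩ Ioo 0 1) ≤ volume (Icc 0 a) :=
          measure_mono fun u hu => ⟨hu.2.1.le, hu.1⟩
      _ = ENNReal.ofReal a := by rw [Real.volume_Icc, sub_zero]
  · calc ENNReal.ofReal a = volume (Ioo 0 a) := by rw [Real.volume_Ioo, sub_zero]
      _ ≤ volume (Iic a ∩ Ioo 0 1) :=
          measure_mono fun u hu => ⟨hu.2.le, hu.1, hu.2.trans_le ha⟩

variable [IsProbabilityMeasure m]

lemma map_quantile : (volume.restrict (Ioo (0 : ℝ) 1)).map (quantile m) = m := by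
  refine Measure.ext_of_Iic _ _ fun x => ?_
  rw [Measure.map_apply measurable_quantile measurableSet_Iic,
    Measure.restrict_apply (measurable_quantile measurableSet_Iic),
    preimage_quantile_Iic_inter_Ioo, volume_Iic_inter_Ioo (cdf_le_one m x), ofReal_cdf]

lemma integrable_quantile (hm : Integrable (fun x => x) m) :
    Integrable (quantile m) (volume.restrict (Ioo (0 : ℝ) 1)) := by
  have h := integrable_map_measure (f := quantile m) (g := fun x : ℝ => x)
    (by rw [map_quantile]; exact measurable_id.aestronglyMeasurable)
    measurable_quantile.aemeasurable
  rw [map_quantile] at h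
  exact h.mp hm

end Quantile

lemma MeasureTheory.Measure.map_ite_mem {α γ : Type*} [MeasurableSpace α] [MeasurableSpace γ]
    (μ : Measure α) {s : Set α} [DecidablePred (· ∈ s)] (hs : MeasurableSet s) (a b : γ) :
    μ.map (fun u => if u ∈ s then b else a) =
      μ sᶜ • Measure.dirac a + μ s • Measure.dirac b := by
  have hmeas : Measurable fun u => if u ∈ s then b else a :=
    Measurable.ite hs measurable_const measurable_const
  have hs' : (fun u => if u ∈ s then b else a) =ᵐ[μ.restrict s] fun _ => b :=
    ae_restrict_of_forall_mem hs fun u hu => if_pos hu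
  have hsc : (fun u => if u ∈ s then b else a) =ᵐ[μ.restrict sᶜ] fun _ => a :=
    ae_restrict_of_forall_mem hs.compl fun u hu => if_neg hu
  calc μ.map (fun u => if u ∈ s then b else a)
      = (μ.restrict s).map (fun u => if u ∈ s then b else a) +
          (μ.restrict sᶜ).map (fun u => if u ∈ s then b else a) := by
        rw [← Measure.map_add _ _ hmeas, Measure.restrict_add_restrict_compl hs]
    _ = μ sᶜ • Measure.dirac a + μ s • Measure.dirac b := by
        rw [Measure.map_congr hs', Measure.map_congr hsc, Measure.map_const, Measure.map_const,
          Measure.restrict_apply_univ, Measure.restrict_apply_univ, add_comm]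

noncomputable def cvarMeasure (β : ℝ) : Measure ℝ :=
  ENNReal.ofReal β • Measure.dirac 0 + ENNReal.ofReal (1 - β) • Measure.dirac (1 - β)⁻¹

section CvarMeasure

variable {β : ℝ}

lemma Ioi_inter_Ioo_zero_one (hβ0 : 0 ≤ β) : Ioi β ∩ Ioo 0 1 = Ioo β 1 := by
  rw [← Ioi_inter_Iio, ← inter_assoc, Ioi_inter_Ioi, sup_eq_left.mpr hβ0, Ioi_inter_Iio]

lemma map_ite_mem_Ioi_eq_cvarMeasure (hβ0 : 0 ≤ β) (hβ1 : β ≤ 1) :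
    (volume.restrict (Ioo (0 : ℝ) 1)).map (fun u => if u ∈ Ioi β then (1 - β)⁻¹ else 0) =
      cvarMeasure β := by
  have hIic : volume (Iic β ∩ Ioo 0 1) = ENNReal.ofReal β := volume_Iic_inter_Ioo hβ1
  have hIoi : volume (Ioi β ∩ Ioo 0 1) = ENNReal.ofReal (1 - β) := by
    rw [Ioi_inter_Ioo_zero_one hβ0, Real.volume_Ioo]
  rw [Measure.map_ite_mem _ measurableSet_Ioi, compl_Ioi,
    Measure.restrict_apply measurableSet_Iic, Measure.restrict_apply measurableSet_Ioi, hIic,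
    hIoi, cvarMeasure]

lemma ae_cvarMeasure : ∀ᵐ y ∂cvarMeasure β, y = 0 ∨ y = (1 - β)⁻¹ := by
  simp only [cvarMeasure, ae_add_measure_iff]
  exact ⟨Measure.ae_smul_measure (by simp [ae_dirac_eq]) _,
    Measure.ae_smul_measure (by simp [ae_dirac_eq]) _⟩

lemma integrable_id_cvarMeasure : Integrable (fun y => y) (cvarMeasure β) :=
  ((integrable_dirac (by simp)).smul_measure ofReal_ne_top).add_measure
    ((integrable_dirac (by simp)).smul_measure ofReal_ne_top)

lemma integral_id_cvarMeasure (hβ1 : β < 1) : ∫ y, y ∂cvarMeasure β = 1 := by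
  rw [cvarMeasure, integral_add_measure ((integrable_dirac (by simp)).smul_measure ofReal_ne_top)
      ((integrable_dirac (by simp)).smul_measure ofReal_ne_top), integral_smul_measure,
    integral_smul_measure, integral_dirac, integral_dirac, smul_zero, zero_add,
    toReal_ofReal (by linarith), smul_eq_mul, mul_inv_cancel₀ (by linarith)]

end CvarMeasure

noncomputable def cvarObjective (β : ℝ) (m : Measure ℝ) (t : ℝ) : ℝ :=
  t + (1 - β)⁻¹ * ∫ x, max (x - t) 0 ∂m

lemma integral_mul_le_of_ae_snd_eq {π : Measure (ℝ × ℝ)} [IsFiniteMeasure π] {c : ℝ}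
    (hc : 0 ≤ c) (h1 : Integrable (fun z => z.1) π) (h2 : Integrable (fun z => z.2) π)
    (hae : ∀ᵐ z ∂π, z.2 = 0 ∨ z.2 = c) (t : ℝ) :
    ∫ z, z.1 * z.2 ∂π ≤ t * ∫ z, z.2 ∂π + c * ∫ z, max (z.1 - t) 0 ∂π := by
  have hpos : Integrable (fun z : ℝ × ℝ => max (z.1 - t) 0) π := by
    simpa using (h1.sub (integrable_const t)).pos_part
  have hmul : Integrable (fun z : ℝ × ℝ => z.1 * z.2) π := by
    refine (h1.abs.const_mul c).mono' (measurable_fst.mul measurable_snd).aestronglyMeasurable ?_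
    filter_upwards [hae] with z hz
    rcases hz with hz | hz <;> rw [hz, Real.norm_eq_abs, abs_mul]
    · simpa using mul_nonneg hc (abs_nonneg z.1)
    · rw [abs_of_nonneg hc, mul_comm]
  have hle : ∀ᵐ z ∂π, z.1 * z.2 ≤ t * z.2 + c * max (z.1 - t) 0 := by
    filter_upwards [hae] with z hz
    rcases hz with hz | hz <;> rw [hz]
    · simpa using mul_nonneg hc (le_max_right (z.1 - t) 0)
    · nlinarith [mul_le_mul_of_nonneg_left (le_max_left (z.1 - t) 0) hc]
  calc ∫ z, z.1 * z.2 ∂π ≤ ∫ z, (t * z.2 + c * max (z.1 - t) 0) ∂π :=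
        integral_mono_ae hmul ((h2.const_mul t).add (hpos.const_mul c)) hle
    _ = t * ∫ z, z.2 ∂π + c * ∫ z, max (z.1 - t) 0 ∂π := by
        rw [integral_add (h2.const_mul t) (hpos.const_mul c), integral_const_mul,
          integral_const_mul]

lemma integral_mul_le_cvarObjective {β : ℝ} (hβ1 : β < 1) {m : Measure ℝ}
    (hm : Integrable (fun x => x) m) {π : Measure (ℝ × ℝ)} [IsProbabilityMeasure π]
    (hfst : π.map Prod.fst = m) (hsnd : π.map Prod.snd = cvarMeasure β) (t : ℝ) :
    ∫ z, z.1 * z.2 ∂π ≤ cvarObjective β m t := by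
  have h1 : Integrable (fun z => z.1) π := by
    rw [← hfst] at hm
    exact hm.comp_measurable measurable_fst
  have h2 : Integrable (fun z => z.2) π := by
    have h := integrable_id_cvarMeasure (β := β)
    rw [← hsnd] at h
    exact h.comp_measurable measurable_snd
  have hae : ∀ᵐ z ∂π, z.2 = 0 ∨ z.2 = (1 - β)⁻¹ :=
    ae_of_ae_map measurable_snd.aemeasurable (hsnd ▸ ae_cvarMeasure)
  have hsnd_mean : ∫ z, z.2 ∂π = 1 := by
    rw [← integral_id_cvarMeasure hβ1, ← hsnd,
      integral_map (f := fun y => y) measurable_snd.aemeasurable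
        measurable_id.aestronglyMeasurable]
  have hfst_pos : ∫ z, max (z.1 - t) 0 ∂π = ∫ x, max (x - t) 0 ∂m := by
    rw [← hfst, integral_map measurable_fst.aemeasurable (by fun_prop)]
  calc ∫ z, z.1 * z.2 ∂π
      ≤ t * ∫ z, z.2 ∂π + (1 - β)⁻¹ * ∫ z, max (z.1 - t) 0 ∂π :=
        integral_mul_le_of_ae_snd_eq (inv_nonneg.2 (by linarith)) h1 h2 hae t
    _ = cvarObjective β m t := by rw [hsnd_mean, hfst_pos, mul_one, cvarObjective]

instance : IsProbabilityMeasure (volume.restrict (Ioo (0 : ℝ) 1)) :=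
  ⟨by simp [Real.volume_Ioo]⟩

noncomputable def quantileCoupling (β : ℝ) (m : Measure ℝ) : Measure (ℝ × ℝ) :=
  (volume.restrict (Ioo (0 : ℝ) 1)).map
    fun u => (quantile m u, if u ∈ Ioi β then (1 - β)⁻¹ else 0)

section QuantileCoupling

variable {β : ℝ} {m : Measure ℝ}

lemma measurable_quantile_prod_ite :
    Measurable fun u => (quantile m u, if u ∈ Ioi β then (1 - β)⁻¹ else 0) :=
  measurable_quantile.prodMk (Measurable.ite measurableSet_Ioi measurable_const measurable_const)

instance : IsProbabilityMeasure (quantileCoupling β m) :=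
  Measure.isProbabilityMeasure_map measurable_quantile_prod_ite.aemeasurable

lemma quantileCoupling_map_fst [IsProbabilityMeasure m] :
    (quantileCoupling β m).map Prod.fst = m := by
  rw [quantileCoupling, Measure.map_map measurable_fst measurable_quantile_prod_ite]
  exact map_quantile

lemma quantileCoupling_map_snd (hβ0 : 0 ≤ β) (hβ1 : β ≤ 1) :
    (quantileCoupling β m).map Prod.snd = cvarMeasure β := by
  rw [quantileCoupling, Measure.map_map measurable_snd measurable_quantile_prod_ite]
  exact map_ite_mem_Ioi_eq_cvarMeasure hβ0 hβ1

lemma integral_mul_quantileCoupling (hβ0 : 0 ≤ β) :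
    ∫ z, z.1 * z.2 ∂quantileCoupling β m =
      (1 - β)⁻¹ * ∫ u in Ioo β 1, quantile m u := by
  have hprod : (fun u => quantile m u * if u ∈ Ioi β then (1 - β)⁻¹ else 0) =
      (Ioi β).indicator fun u => (1 - β)⁻¹ * quantile m u := by
    ext u
    by_cases hu : u ∈ Ioi β <;> simp [hu, mul_comm]
  rw [quantileCoupling, integral_map measurable_quantile_prod_ite.aemeasurable (by fun_prop),
    hprod, integral_indicator measurableSet_Ioi, Measure.restrict_restrict measurableSet_Ioi,
    Ioi_inter_Ioo_zero_one hβ0, integral_const_mul]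

end QuantileCoupling

section Evaluation

variable {m : Measure ℝ} [IsProbabilityMeasure m]

lemma integral_quantile :
    ∫ u in Ioo (0 : ℝ) 1, quantile m u = ∫ x, x ∂m := by
  conv_rhs => rw [← map_quantile (m := m)]
  rw [integral_map (f := fun x => x) measurable_quantile.aemeasurable
    measurable_id.aestronglyMeasurable]

lemma integral_max_sub_quantile {β : ℝ} (hβ : β ∈ Ioo (0 : ℝ) 1)
    (hm : Integrable (fun x => x) m) :
    ∫ x, max (x - quantile m β) 0 ∂m =
      (∫ u in Ioo β 1, quantile m u) - (1 - β) * quantile m β := by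
  set t₀ := quantile m β
  have hpos : ∀ u ∈ Ioo (0 : ℝ) 1,
      max (quantile m u - t₀) 0 = (Ioi β).indicator (fun u => quantile m u - t₀) u := by
    intro u hu
    by_cases hβu : β < u
    · rw [indicator_of_mem (mem_Ioi.2 hβu),
        max_eq_left (sub_nonneg.2 (quantile_mono hβ hu hβu.le))]
    · rw [indicator_of_notMem (by simpa using hβu),
        max_eq_right (sub_nonpos.2 (quantile_mono hu hβ (not_lt.1 hβu)))]
  have hq : Integrable (quantile m) (volume.restrict (Ioo β 1)) :=
    (integrable_quantile hm).mono_measure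
      (Measure.restrict_mono (Ioo_subset_Ioo_left hβ.1.le) le_rfl)
  conv_lhs => rw [← map_quantile (m := m)]
  rw [integral_map measurable_quantile.aemeasurable (by fun_prop),
    setIntegral_congr_fun measurableSet_Ioo hpos, integral_indicator measurableSet_Ioi,
    Measure.restrict_restrict measurableSet_Ioi, Ioi_inter_Ioo_zero_one hβ.1.le,
    integral_sub hq (integrable_const t₀), setIntegral_const, Real.volume_real_Ioo_of_le hβ.2.le,
    smul_eq_mul]

lemma cvarObjective_quantile {β : ℝ} (hβ : β ∈ Ioo (0 : ℝ) 1)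
    (hm : Integrable (fun x => x) m) :
    cvarObjective β m (quantile m β) = (1 - β)⁻¹ * ∫ u in Ioo β 1, quantile m u := by
  have hβ1 : 1 - β ≠ 0 := by linarith [hβ.2]
  rw [cvarObjective, integral_max_sub_quantile hβ hm]
  field_simp
  ring

lemma cvarObjective_zero (hm : Integrable (fun x => x) m) (t : ℝ) :
    cvarObjective 0 m t = ∫ x, max x t ∂m := by
  have hmax : (fun x => max x t) = fun x => max (x - t) 0 + t := by
    ext x
    rw [← max_add_add_right, sub_add_cancel, zero_add]
  have hpos : Integrable (fun x => max (x - t) 0) m := by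
    simpa using (hm.sub (integrable_const t)).pos_part
  rw [cvarObjective, hmax, integral_add hpos (integrable_const t), integral_const, probReal_univ,
    one_smul, sub_zero, inv_one, one_mul, add_comm]

lemma tendsto_cvarObjective_zero_atBot (hm : Integrable (fun x => x) m) :
    Tendsto (cvarObjective 0 m) atBot (𝓝 (∫ x, x ∂m)) := by
  rw [show cvarObjective 0 m = fun t => ∫ x, max x t ∂m from funext (cvarObjective_zero hm)]
  refine tendsto_integral_filter_of_dominated_convergence (fun x => |x|)
    (Eventually.of_forall fun t => by fun_prop) ?_ hm.abs (ae_of_all _ fun x => ?_)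
  · filter_upwards [eventually_le_atBot 0] with t ht
    refine ae_of_all _ fun x => ?_
    rw [Real.norm_eq_abs, abs_le]
    exact ⟨by linarith [neg_abs_le x, le_max_left x t],
      max_le (le_abs_self x) (ht.trans (abs_nonneg x))⟩
  · exact tendsto_const_nhds.congr'
      ((eventually_le_atBot x).mono fun t ht => (max_eq_left ht).symm)

lemma iInf_cvarObjective_le {β : ℝ} (hβ0 : 0 ≤ β) (hβ1 : β < 1)
    (hm : Integrable (fun x => x) m) (hbdd : BddBelow (range (cvarObjective β m))) :
    ⨅ t, cvarObjective β m t ≤ (1 - β)⁻¹ * ∫ u in Ioo β 1, quantile m u := by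
  rcases hβ0.eq_or_lt with rfl | hβ
  · rw [sub_zero, inv_one, one_mul, integral_quantile]
    exact ge_of_tendsto' (tendsto_cvarObjective_zero_atBot hm) fun t => ciInf_le hbdd t
  · exact cvarObjective_quantile ⟨hβ, hβ1⟩ hm ▸ ciInf_le hbdd _

end Evaluation

theorem iInf_cvarObjective_eq_chi {β : ℝ} (hβ0 : 0 ≤ β) (hβ1 : β < 1) {m : Measure ℝ}
    [IsProbabilityMeasure m] (hm : Integrable (fun x => x) m) :
    ⨅ t, cvarObjective β m t = chi {cvarMeasure β} m := by
  let values : Set ℝ := {v | ∃ π : Measure (ℝ × ℝ), IsProbabilityMeasure π ∧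
      π.map Prod.fst = m ∧ π.map Prod.snd ∈ ({cvarMeasure β} : Set _) ∧
      v = ∫ z : ℝ × ℝ, z.1 * z.2 ∂π}
  set v₀ := ∫ z, z.1 * z.2 ∂quantileCoupling β m
  have hv₀ : v₀ ∈ values :=
    ⟨_, inferInstance, quantileCoupling_map_fst, quantileCoupling_map_snd hβ0 hβ1.le, rfl⟩
  have hle : ∀ v ∈ values, ∀ t, v ≤ cvarObjective β m t := by
    rintro v ⟨π, hπ, hfst, hsnd, rfl⟩ t
    exact integral_mul_le_cvarObjective hβ1 hm hfst hsnd t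
  change _ = sSup values
  refine le_antisymm ?_ (le_ciInf fun t => csSup_le ⟨v₀, hv₀⟩ fun v hv => hle v hv t)
  calc ⨅ t, cvarObjective β m t
      ≤ (1 - β)⁻¹ * ∫ u in Ioo β 1, quantile m u :=
        iInf_cvarObjective_le hβ0 hβ1 hm ⟨v₀, forall_mem_range.2 (hle v₀ hv₀)⟩
    _ = v₀ := (integral_mul_quantileCoupling hβ0).symm
    _ ≤ sSup values := le_csSup ⟨cvarObjective β m 0, fun v hv => hle v hv 0⟩ hv₀

/-- Optimal transport representation of the Conditional Value at Risk: for `β ∈ [0,1)` and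
`r_β = β·δ₀ + (1−β)·δ_{1/(1−β)}`, one has
`CV@R_β(X) = inf_t { t + (1−β)⁻¹ E[(X−t)₊] } = χ_{{r_β}}(ℙ_X)` for every `X ∈ L¹`. -/
theorem cvar_transport_representation
    (β : ℝ) (hβ0 : 0 ≤ β) (hβ1 : β < 1)
    (Ω : Type) [MeasurableSpace Ω] (P : Measure Ω) [IsProbabilityMeasure P]
    (X : Ω → ℝ) (hX : MemLp X 1 P) :
    (⨅ t : ℝ, (t + (1 - β)⁻¹ * ∫ ω, max (X ω - t) 0 ∂P)) =
      chi {ENNReal.ofReal β • Measure.dirac (0:ℝ) +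
            ENNReal.ofReal (1 - β) • Measure.dirac ((1 - β)⁻¹)} (P.map X) := by
  have hXm : AEMeasurable X P := hX.aestronglyMeasurable.aemeasurable
  have : IsProbabilityMeasure (P.map X) := Measure.isProbabilityMeasure_map hXm
  have hm : Integrable (fun x => x) (P.map X) :=
    (integrable_map_measure measurable_id.aestronglyMeasurable hXm).mpr
      (memLp_one_iff_integrable.mp hX)
  have hobj : ∀ t, ∫ ω, max (X ω - t) 0 ∂P = ∫ x, max (x - t) 0 ∂P.map X :=
    fun t => (integral_map hXm
      (by fun_prop : Measurable fun x : ℝ => max (x - t) 0).aestronglyMeasurable).symm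
  simp_rw [hobj]
  exact iInf_cvarObjective_eq_chi hβ0 hβ1 hm
end

section
/- Fix p ∈ (1,∞) with conjugate exponent q = p/(p−1) and a constant c > 1. For (t,u) ∈ ℝ × [0,∞), define g_{t,u}(y) := t·y + u·y^q for y ≥ 0, and its conjugate g_{t,u}*(x) := sup_{y ≥ 0} (x·y − g_{t,u}(y)) ∈ ℝ ∪ {+∞}. Then for every X ∈ L^p(Ω,ℝ), the higher order dual risk measure ρ_{p,c}(X) := inf_{t ∈ ℝ} { t + c·(E[(X−t)₊^p])^{1/p} } satisfies ρ_{p,c}(X) = inf_{(t,u) ∈ ℝ × [0,∞)} { E[g_{t,u}*(X)] + t + u·c^q }, and moreover this infimum is attained: there exists (t̄,ū) ∈ ℝ × [0,∞) achieving it. -/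
open MeasureTheory ENNReal

/-- The conjugate `g_{t,u}*(x) = sup_{y ≥ 0} (x·y − (t·y + u·y^q))`, an element of
`[0,+∞]` (it is nonnegative since `y = 0` is admissible). -/
noncomputable def gstar (q t u : ℝ) (x : ℝ) : ℝ≥0∞ :=
  ⨆ y : {y : ℝ // 0 ≤ y}, ENNReal.ofReal (x * y.1 - (t * y.1 + u * y.1 ^ q))

/-!
For `u > 0` the conjugate is explicit, `g_{t,u}*(x) = (x - t)₊ ^ p / (p (q u) ^ (p - 1))`, by
Young's inequality (with equality at `y = ((x - t)₊ / (q u)) ^ (p - 1)`); for `u = 0` it is `0` on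
`x ≤ t` and `+∞` beyond. So for fixed `t`, with `A = E[(X - t)₊ ^ p]`, the minimisation over
`u ≥ 0` is the scalar problem `inf_u A / (p (q u) ^ (p - 1)) + u c ^ q`, whose value is `c A ^ (1/p)`
(Young again, at `y = c`), attained at `u = A ^ (1/p) / (q c ^ (q - 1))`, or at `u = 0` when
`A = 0`. The dual problem is therefore the primal one. The primal objective is continuous, at
least `t`, and by Hölder at least `c E[X] - (c - 1) t`; as `c > 1` it is coercive and so attains
its infimum.
-/

namespace Real.HolderConjugate

variable {p q : ℝ}

theorem sub_one_mul_sub_one (hpq : p.HolderConjugate q) : (p - 1) * (q - 1) = 1 := by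
  linear_combination hpq.mul_eq_add

theorem mul_sub_mul_rpow_le (hpq : p.HolderConjugate q) {a u y : ℝ} (ha : 0 ≤ a) (hu : 0 < u)
    (hy : 0 ≤ y) : a * y - u * y ^ q ≤ a ^ p / (p * (q * u) ^ (p - 1)) := by
  have hqu : 0 < q * u := mul_pos hpq.symm.pos hu
  set s := (q * u) ^ (1 / q)
  have hs : 0 < s := rpow_pos_of_pos hqu _
  have hsp : s ^ p = (q * u) ^ (p - 1) := by
    rw [← rpow_mul hqu.le, one_div_mul_eq_div, hpq.div_conj_eq_sub_one]
  have hsq : s ^ q = q * u := by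
    rw [← rpow_mul hqu.le, one_div_mul_cancel hpq.symm.ne_zero, rpow_one]
  -- Young's inequality for the pair `(a / s, s * y)`
  have young := young_inequality_of_nonneg (div_nonneg ha hs.le) (mul_nonneg hs.le hy) hpq
  rw [div_rpow ha hs.le, mul_rpow hs.le hy, hsp, hsq] at young
  have hpos : 0 < (q * u) ^ (p - 1) := rpow_pos_of_pos hqu _
  have hp := hpq.pos
  have hq := hpq.symm.pos
  calc a * y - u * y ^ q = a / s * (s * y) - q * u * y ^ q / q := by field_simp
    _ ≤ a ^ p / (q * u) ^ (p - 1) / p := by linarith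
    _ = a ^ p / (p * (q * u) ^ (p - 1)) := by rw [div_div, mul_comm]

theorem mul_sub_mul_rpow_eq (hpq : p.HolderConjugate q) {a u y : ℝ} (hu : 0 < u) (hy : 0 ≤ y)
    (ha : a = q * u * y ^ (q - 1)) : a * y - u * y ^ q = a ^ p / (p * (q * u) ^ (p - 1)) := by
  have hqu : 0 < q * u := mul_pos hpq.symm.pos hu
  have hyq : y ^ (q - 1) * y = y ^ q := by
    rw [← rpow_add_one' hy (by linarith [hpq.symm.pos]), sub_add_cancel]
  have hap : a ^ p = (q * u) ^ p * y ^ q := by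
    rw [ha, mul_rpow hqu.le (rpow_nonneg hy _), ← rpow_mul hy, hpq.symm.sub_one_mul_conj]
  have hqu_p : (q * u) ^ p = (q * u) ^ (p - 1) * (q * u) := by
    rw [← rpow_add_one hqu.ne', sub_add_cancel]
  have hpos : 0 < (q * u) ^ (p - 1) := rpow_pos_of_pos hqu _
  have hp := hpq.pos
  have hlhs : a * y - u * y ^ q = (q - 1) * u * y ^ q := by
    rw [ha, mul_assoc, hyq]; ring
  rw [hlhs, hap, hqu_p]
  field_simp
  linear_combination y ^ q * hpq.mul_eq_add

end Real.HolderConjugate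

open Real in
theorem iSup_ofReal_mul_sub_mul_rpow {p q : ℝ} (hpq : p.HolderConjugate q) (b : ℝ) {u : ℝ}
    (hu : 0 < u) :
    ⨆ y : {y : ℝ // 0 ≤ y}, ENNReal.ofReal (b * y - u * y ^ q) =
      ENNReal.ofReal (max b 0 ^ p / (p * (q * u) ^ (p - 1))) := by
  apply le_antisymm
  · refine iSup_le fun ⟨y, hy⟩ => ENNReal.ofReal_le_ofReal ?_
    calc b * y - u * y ^ q ≤ max b 0 * y - u * y ^ q := by gcongr; exact le_max_left b 0
      _ ≤ _ := hpq.mul_sub_mul_rpow_le (le_max_right b 0) hu hy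
  · have hqu : 0 < q * u := mul_pos hpq.symm.pos hu
    set y := (max b 0 / (q * u)) ^ (p - 1)
    have hy : 0 ≤ y := rpow_nonneg (div_nonneg (le_max_right b 0) hqu.le) _
    have hb : max b 0 = q * u * y ^ (q - 1) := by
      rw [← rpow_mul (div_nonneg (le_max_right b 0) hqu.le), hpq.sub_one_mul_sub_one,
        Real.rpow_one, mul_div_cancel₀ _ hqu.ne']
    have hby : b * y = max b 0 * y := by
      rcases le_total b 0 with hb0 | hb0
      · have hy0 : y = 0 := by
          simp only [y, max_eq_right hb0, zero_div, zero_rpow hpq.sub_one_ne_zero]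
        simp [hy0]
      · rw [max_eq_left hb0]
    refine le_iSup_of_le ⟨y, hy⟩ (ENNReal.ofReal_le_ofReal (le_of_eq ?_))
    rw [hby, hpq.mul_sub_mul_rpow_eq hu hy hb]

theorem gstar_of_pos {p q : ℝ} (hpq : p.HolderConjugate q) (t : ℝ) {u : ℝ} (hu : 0 < u) (x : ℝ) :
    gstar q t u x = ENNReal.ofReal (max (x - t) 0 ^ p / (p * (q * u) ^ (p - 1))) := by
  rw [gstar, ← iSup_ofReal_mul_sub_mul_rpow hpq (x - t) hu]
  congr! 3
  ring

theorem gstar_zero (q t x : ℝ) : gstar q t 0 x = {x | t < x}.indicator ⊤ x := by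
  rcases lt_or_ge t x with htx | hxt
  · rw [Set.indicator_of_mem (show x ∈ {x | t < x} from htx)]
    refine ENNReal.eq_top_of_forall_nnreal_le fun r => le_iSup_of_le ⟨r / (x - t), ?_⟩ ?_
    · exact div_nonneg r.2 (sub_pos.2 htx).le
    · rw [← ENNReal.ofReal_coe_nnreal]
      refine ENNReal.ofReal_le_ofReal (le_of_eq ?_)
      field_simp [(sub_pos.2 htx).ne']
      ring
  · rw [Set.indicator_of_notMem (show x ∉ {x | t < x} from hxt.not_gt)]
    refine le_antisymm (iSup_le fun ⟨y, hy⟩ => ?_) bot_le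
    rw [ENNReal.ofReal_eq_zero.2]
    nlinarith

section Integral

variable {Ω : Type*} [MeasurableSpace Ω] {μ : Measure Ω} {X : Ω → ℝ} {p q t : ℝ}

open Real Filter

theorem MeasureTheory.MemLp.integrable_rpow_of_nonneg [IsFiniteMeasure μ] {f : Ω → ℝ}
    (hf : MemLp f (ENNReal.ofReal p) μ) (hp : 0 < p) (h0 : ∀ ω, 0 ≤ f ω) :
    Integrable (fun ω => f ω ^ p) μ := by
  have h := hf.integrable_norm_rpow (ENNReal.ofReal_ne_zero_iff.2 hp) ENNReal.ofReal_ne_top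
  rw [ENNReal.toReal_ofReal hp.le] at h
  simpa only [Real.norm_of_nonneg (h0 _)] using h

theorem MeasureTheory.MemLp.integrable_posPart_sub_rpow [IsFiniteMeasure μ]
    (hX : MemLp X (ENNReal.ofReal p) μ) (hp : 0 < p) (t : ℝ) :
    Integrable (fun ω => max (X ω - t) 0 ^ p) μ :=
  (hX.sub (memLp_const t)).pos_part.integrable_rpow_of_nonneg hp fun _ => le_max_right _ _

theorem integral_posPart_sub_rpow_eq_zero_iff (hp : 0 < p)
    (hint : Integrable (fun ω => max (X ω - t) 0 ^ p) μ) :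
    ∫ ω, max (X ω - t) 0 ^ p ∂μ = 0 ↔ μ {ω | t < X ω} = 0 := by
  rw [integral_eq_zero_iff_of_nonneg (fun ω => rpow_nonneg (le_max_right _ _) p) hint,
    Filter.EventuallyEq, ae_iff]
  simp [rpow_eq_zero (le_max_right _ _) hp.ne']

theorem lintegral_gstar_of_pos (hpq : p.HolderConjugate q)
    (hint : Integrable (fun ω => max (X ω - t) 0 ^ p) μ) {u : ℝ} (hu : 0 < u) :
    ∫⁻ ω, gstar q t u (X ω) ∂μ =
      ENNReal.ofReal ((∫ ω, max (X ω - t) 0 ^ p ∂μ) / (p * (q * u) ^ (p - 1))) := by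
  simp_rw [gstar_of_pos hpq t hu, ← integral_div]
  exact (ofReal_integral_eq_lintegral_ofReal (hint.div_const _)
    (ae_of_all _ fun ω => div_nonneg (rpow_nonneg (le_max_right _ _) p)
      (mul_pos hpq.pos (rpow_pos_of_pos (mul_pos hpq.symm.pos hu) _)).le)).symm

theorem lintegral_gstar_zero (hX : AEMeasurable X μ) :
    ∫⁻ ω, gstar q t 0 (X ω) ∂μ = ⊤ * μ {ω | t < X ω} := by
  simp_rw [gstar_zero]
  exact lintegral_indicator_const₀ (nullMeasurableSet_lt aemeasurable_const hX) ⊤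

theorem coe_le_lintegral_gstar_add [IsFiniteMeasure μ] (hpq : p.HolderConjugate q)
    (hX : MemLp X (ENNReal.ofReal p) μ) {c : ℝ} (hc : 0 ≤ c) (t : ℝ) {u : ℝ} (hu : 0 ≤ u) :
    ((t + c * (∫ ω, max (X ω - t) 0 ^ p ∂μ) ^ (1 / p) : ℝ) : EReal) ≤
      ((∫⁻ ω, gstar q t u (X ω) ∂μ : ℝ≥0∞) : EReal) + ((t + u * c ^ q : ℝ) : EReal) := by
  have hint := hX.integrable_posPart_sub_rpow hpq.pos t
  have hA : 0 ≤ ∫ ω, max (X ω - t) 0 ^ p ∂μ :=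
    integral_nonneg fun ω => rpow_nonneg (le_max_right _ _) p
  rcases hu.eq_or_lt with rfl | hu
  · rw [lintegral_gstar_zero hX.aemeasurable]
    by_cases hμ : μ {ω | t < X ω} = 0
    · rw [(integral_posPart_sub_rpow_eq_zero_iff hpq.pos hint).2 hμ, hμ,
        zero_rpow hpq.one_div_ne_zero]
      simp
    · simp [ENNReal.top_mul hμ]
  · have hqu : 0 < p * (q * u) ^ (p - 1) :=
      mul_pos hpq.pos (rpow_pos_of_pos (mul_pos hpq.symm.pos hu) _)
    have young := hpq.mul_sub_mul_rpow_le (rpow_nonneg hA (1 / p)) hu hc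
    rw [← rpow_mul hA, one_div_mul_cancel hpq.ne_zero, Real.rpow_one] at young
    rw [lintegral_gstar_of_pos hpq hint hu, EReal.coe_ennreal_ofReal,
      max_eq_left (div_nonneg hA hqu.le), ← EReal.coe_add, EReal.coe_le_coe_iff]
    linarith

theorem exists_lintegral_gstar_add_eq [IsFiniteMeasure μ] (hpq : p.HolderConjugate q)
    (hX : MemLp X (ENNReal.ofReal p) μ) {c : ℝ} (hc : 0 < c) (t : ℝ) :
    ∃ u, 0 ≤ u ∧ ((∫⁻ ω, gstar q t u (X ω) ∂μ : ℝ≥0∞) : EReal) + ((t + u * c ^ q : ℝ) : EReal) =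
      ((t + c * (∫ ω, max (X ω - t) 0 ^ p ∂μ) ^ (1 / p) : ℝ) : EReal) := by
  have hint := hX.integrable_posPart_sub_rpow hpq.pos t
  set A := ∫ ω, max (X ω - t) 0 ^ p ∂μ
  have hA : 0 ≤ A := integral_nonneg fun ω => rpow_nonneg (le_max_right _ _) p
  rcases hA.eq_or_lt with hA0 | hA0
  · refine ⟨0, le_rfl, ?_⟩
    rw [lintegral_gstar_zero hX.aemeasurable,
      (integral_posPart_sub_rpow_eq_zero_iff hpq.pos hint).1 hA0.symm, ← hA0,
      zero_rpow hpq.one_div_ne_zero]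
    simp
  · set a := A ^ (1 / p)
    have ha : 0 < a := rpow_pos_of_pos hA0 _
    have hcq : 0 < c ^ (q - 1) := rpow_pos_of_pos hc _
    have hq := hpq.symm.pos
    -- the optimal `u` makes `c` the maximiser in the conjugate of `u * y ^ q`
    set u := a / (q * c ^ (q - 1))
    have hu : 0 < u := by positivity
    have hqu : 0 < p * (q * u) ^ (p - 1) :=
      mul_pos hpq.pos (rpow_pos_of_pos (mul_pos hq hu) _)
    have key := hpq.mul_sub_mul_rpow_eq hu hc.le (a := a) (by simp only [u]; field_simp)
    rw [← rpow_mul hA, one_div_mul_cancel hpq.ne_zero, Real.rpow_one] at key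
    refine ⟨u, hu.le, ?_⟩
    rw [lintegral_gstar_of_pos hpq hint hu, EReal.coe_ennreal_ofReal,
      max_eq_left (div_nonneg hA hqu.le), ← EReal.coe_add, EReal.coe_eq_coe_iff]
    linarith

theorem continuous_integral_posPart_sub_rpow [IsFiniteMeasure μ]
    (hX : MemLp X (ENNReal.ofReal p) μ) (hp : 0 < p) :
    Continuous fun t => ∫ ω, max (X ω - t) 0 ^ p ∂μ := by
  refine continuous_iff_continuousAt.2 fun t₀ => ?_
  have hbound : Integrable (fun ω => (‖X ω‖ + (|t₀| + 1)) ^ p) μ :=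
    (hX.norm.add (memLp_const _)).integrable_rpow_of_nonneg hp fun ω =>
      add_nonneg (norm_nonneg _) (by positivity)
  refine continuousAt_of_dominated
    (Eventually.of_forall fun t => (hX.integrable_posPart_sub_rpow hp t).1) ?_ hbound
    (ae_of_all _ fun ω => ?_)
  · filter_upwards [eventually_abs_sub_lt t₀ one_pos] with t ht
    refine ae_of_all _ fun ω => ?_
    rw [Real.norm_of_nonneg (rpow_nonneg (le_max_right _ _) p)]
    refine rpow_le_rpow (le_max_right _ _) (max_le ?_ (by positivity)) hp.le
    have := neg_abs_le t
    have := abs_sub_abs_le_abs_sub t t₀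
    rw [Real.norm_eq_abs]
    linarith [le_abs_self (X ω)]
  · exact (continuousAt_rpow_const _ p (Or.inr hp.le)).comp
      ((continuous_const.sub continuous_id).max continuous_const).continuousAt

theorem integral_le_rpow_integral_posPart_rpow [IsProbabilityMeasure μ]
    (hpq : p.HolderConjugate q) {f : Ω → ℝ} (hf : MemLp f (ENNReal.ofReal p) μ) :
    ∫ ω, f ω ∂μ ≤ (∫ ω, max (f ω) 0 ^ p ∂μ) ^ (1 / p) := by
  have hf1 : MemLp f 1 μ := hf.mono_exponent (ENNReal.one_le_ofReal.2 hpq.lt.le)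
  calc ∫ ω, f ω ∂μ ≤ ∫ ω, max (f ω) 0 * 1 ∂μ := by
        simp_rw [mul_one]
        exact integral_mono (memLp_one_iff_integrable.1 hf1)
          (memLp_one_iff_integrable.1 hf1.pos_part) fun ω => le_max_left _ _
    _ ≤ (∫ ω, max (f ω) 0 ^ p ∂μ) ^ (1 / p) * (∫ _, (1 : ℝ) ^ q ∂μ) ^ (1 / q) :=
        integral_mul_le_Lp_mul_Lq_of_nonneg hpq (ae_of_all _ fun _ => le_max_right _ _)
          (ae_of_all _ fun _ => zero_le_one) hf.pos_part (memLp_const 1)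
    _ = (∫ ω, max (f ω) 0 ^ p ∂μ) ^ (1 / p) := by simp

theorem exists_forall_add_mul_rpow_integral_posPart_sub_rpow_le [IsProbabilityMeasure μ]
    (hpq : p.HolderConjugate q) (hX : MemLp X (ENNReal.ofReal p) μ) {c : ℝ} (hc : 1 < c) :
    ∃ t₀, ∀ t, t₀ + c * (∫ ω, max (X ω - t₀) 0 ^ p ∂μ) ^ (1 / p) ≤
      t + c * (∫ ω, max (X ω - t) 0 ^ p ∂μ) ^ (1 / p) := by
  have hc₀ : 0 ≤ c := zero_le_one.trans hc.le
  refine Continuous.exists_forall_le (continuous_id.add (continuous_const.mul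
    ((continuous_integral_posPart_sub_rpow hX hpq.pos).rpow_const
      fun _ => Or.inr hpq.one_div_nonneg))) ?_
  rw [cocompact_eq_atBot_atTop, tendsto_sup]
  constructor
  · -- `(∫ (X - t)₊ ^ p) ^ (1 / p) ≥ ∫ X - t` gives growth of slope `c - 1` at `-∞`
    refine tendsto_atTop_mono (fun t => ?_) (tendsto_atTop_add_const_right _ (c * ∫ ω, X ω ∂μ)
      (tendsto_id.const_mul_atBot_of_neg (sub_neg.2 hc)))
    have h := integral_le_rpow_integral_posPart_rpow (f := fun ω => X ω - t) hpq
      (hX.sub (memLp_const t))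
    rw [integral_sub (hX.integrable (ENNReal.one_le_ofReal.2 hpq.lt.le)) (integrable_const t),
      integral_const, probReal_univ, one_smul] at h
    simp only [id]
    nlinarith
  · refine tendsto_atTop_mono (fun t => le_add_of_nonneg_right (mul_nonneg hc₀ ?_)) tendsto_id
    exact rpow_nonneg (integral_nonneg fun ω => rpow_nonneg (le_max_right _ _) p) _

end Integral

/-- Duality formula for higher moment risk measures and attainment of the dual problem:
`ρ_{p,c}(X) = inf_{(t,u) ∈ ℝ × [0,∞)} { E[g_{t,u}*(X)] + t + u·c^q }`, and the infimum
is attained at some `(t̄,ū)`. -/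
theorem higher_moment_duality_attained
    (p : ℝ) (hp : 1 < p) (c : ℝ) (hc : 1 < c) (q : ℝ) (hq : q = p / (p - 1))
    (Ω : Type) [MeasurableSpace Ω] (P : Measure Ω) [IsProbabilityMeasure P]
    (X : Ω → ℝ) (hX : MemLp X (ENNReal.ofReal p) P) :
    (((⨅ t : ℝ, (t + c * (∫ ω, max (X ω - t) 0 ^ p ∂P) ^ (1 / p)) : ℝ)) : EReal) =
      (⨅ tu : ℝ × {u : ℝ // 0 ≤ u},
        (((∫⁻ ω, gstar q tu.1 tu.2.1 (X ω) ∂P : ℝ≥0∞) : EReal) +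
          ((tu.1 + tu.2.1 * c ^ q : ℝ) : EReal))) ∧
    ∃ t u : ℝ, 0 ≤ u ∧
      (((⨅ t' : ℝ, (t' + c * (∫ ω, max (X ω - t') 0 ^ p ∂P) ^ (1 / p)) : ℝ)) : EReal) =
        ((∫⁻ ω, gstar q t u (X ω) ∂P : ℝ≥0∞) : EReal) + ((t + u * c ^ q : ℝ) : EReal) := by
  have hpq : p.HolderConjugate q := (Real.holderConjugate_iff_eq_conjExponent hp).2 hq
  have hc₀ : 0 < c := zero_lt_one.trans hc
  obtain ⟨t₀, ht₀⟩ := exists_forall_add_mul_rpow_integral_posPart_sub_rpow_le hpq hX hc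
  obtain ⟨u₀, hu₀, hdual⟩ := exists_lintegral_gstar_add_eq hpq hX hc₀ t₀
  have hinf : ⨅ t : ℝ, (t + c * (∫ ω, max (X ω - t) 0 ^ p ∂P) ^ (1 / p)) =
      t₀ + c * (∫ ω, max (X ω - t₀) 0 ^ p ∂P) ^ (1 / p) :=
    le_antisymm (ciInf_le ⟨_, Set.forall_mem_range.2 ht₀⟩ t₀) (le_ciInf ht₀)
  rw [hinf, ← hdual]
  refine ⟨le_antisymm (le_iInf fun ⟨t, u, hu⟩ => ?_) (iInf_le_of_le (t₀, ⟨u₀, hu₀⟩) le_rfl),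
    t₀, u₀, hu₀, rfl⟩
  calc _ = ((t₀ + c * (∫ ω, max (X ω - t₀) 0 ^ p ∂P) ^ (1 / p) : ℝ) : EReal) := hdual
    _ ≤ ((t + c * (∫ ω, max (X ω - t) 0 ^ p ∂P) ^ (1 / p) : ℝ) : EReal) :=
        EReal.coe_le_coe_iff.2 (ht₀ t)
    _ ≤ _ := coe_le_lintegral_gstar_add hpq hX hc₀.le t hu
end
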